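/- Let d ∈ ℕ, α > 0, σ > 0, let μ be a probability measure on ℝ^d, and define p(x) = ∫_{ℝ^d} φ_σ(x − α y) dμ(y) where φ_σ(x) = (2πσ²)^{−d/2} exp(−‖x‖²/(2σ²)). Then for every x ∈ ℝ^d, ∇ log p(x) = (1/σ²) · ( −x + α · ( ∫_{ℝ^d} φ_σ(x − α y) y dμ(y) ) / ( ∫_{ℝ^d} φ_σ(x − α y) dμ(y) ) ), i.e. the score of the noise-perturbed marginal density equals the stated ratio of two integrals against the data distribution. -/

import Mathlib

open MeasureTheory ProbabilityTheory Real

/-- The centered Gaussian density with scale `σ` on `ℝ^d`: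
`φ_σ(x) = (2πσ²)^{−d/2} exp(−‖x‖²/(2σ²))`. -/
noncomputable def gaussDensity (d : ℕ) (σ : ℝ) (x : EuclideanSpace ℝ (Fin d)) : ℝ :=
  (2 * π * σ ^ 2) ^ (-(d : ℝ) / 2) * Real.exp (-‖x‖ ^ 2 / (2 * σ ^ 2))

/-!
Since `∇φ_σ(z) = -σ⁻² φ_σ(z) z` and `φ_σ(z) ‖z‖` is bounded, the gradient of
`p(x) = ∫ φ_σ(x - α y) dμ(y)` may be taken under the integral sign, giving
`∇p(x) = -σ⁻² ∫ φ_σ(x - α y) (x - α y) dμ(y) = -σ⁻² (p(x) x - α ∫ φ_σ(x - α y) y dμ(y))`.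
As `p > 0`, the chain rule `∇ log p = p⁻¹ ∇p` gives the formula.
-/

open InnerProductSpace Topology

section Gradient

variable {F : Type*} [NormedAddCommGroup F] [InnerProductSpace ℝ F] [CompleteSpace F]

theorem HasGradientAt.log {f : F → ℝ} {f' x : F} (hf : HasGradientAt f f' x) (hx : f x ≠ 0) :
    HasGradientAt (fun y => Real.log (f y)) ((f x)⁻¹ • f') x := by
  rw [hasGradientAt_iff_hasFDerivAt, map_smul]
  exact hf.hasFDerivAt.log hx

theorem hasGradientAt_integral_of_dominated_of_gradient_le {Ω : Type*} [MeasurableSpace Ω]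
    {μ : Measure Ω} {f : F → Ω → ℝ} {f' : F → Ω → F} {x₀ : F} {s : Set F} {bound : Ω → ℝ}
    (hs : s ∈ 𝓝 x₀)
    (hf_meas : ∀ᶠ x in 𝓝 x₀, AEStronglyMeasurable (f x) μ) (hf_int : Integrable (f x₀) μ)
    (hf'_meas : AEStronglyMeasurable (f' x₀) μ)
    (h_bound : ∀ᵐ a ∂μ, ∀ x ∈ s, ‖f' x a‖ ≤ bound a)
    (bound_integrable : Integrable bound μ)
    (h_diff : ∀ᵐ a ∂μ, ∀ x ∈ s, HasGradientAt (f · a) (f' x a) x) :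
    HasGradientAt (fun x => ∫ a, f x a ∂μ) (∫ a, f' x₀ a ∂μ) x₀ := by
  have h_comm : ∫ a, toDual ℝ F (f' x₀ a) ∂μ = toDual ℝ F (∫ a, f' x₀ a ∂μ) :=
    (toDual ℝ F).toLinearIsometry.integral_comp_comm _
  rw [hasGradientAt_iff_hasFDerivAt, ← h_comm]
  refine hasFDerivAt_integral_of_dominated_of_fderiv_le hs hf_meas hf_int
    ((toDual ℝ F).continuous.comp_aestronglyMeasurable hf'_meas) ?_
    bound_integrable (h_diff.mono fun a ha x hx => (ha x hx).hasFDerivAt)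
  filter_upwards [h_bound] with a ha x hx
  simpa using ha x hx

end Gradient

section GaussDensity

variable {d : ℕ} {σ : ℝ}

theorem continuous_gaussDensity : Continuous (gaussDensity d σ) := by
  unfold gaussDensity
  fun_prop

theorem gaussDensity_nonneg (z : EuclideanSpace ℝ (Fin d)) : 0 ≤ gaussDensity d σ z := by
  unfold gaussDensity
  positivity

theorem gaussDensity_pos (hσ : 0 < σ) (z : EuclideanSpace ℝ (Fin d)) : 0 < gaussDensity d σ z := by
  unfold gaussDensity
  positivity

theorem gaussDensity_le (z : EuclideanSpace ℝ (Fin d)) :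
    gaussDensity d σ z ≤ (2 * π * σ ^ 2) ^ (-(d : ℝ) / 2) := by
  unfold gaussDensity
  refine mul_le_of_le_one_right (by positivity) (exp_le_one_iff.2 ?_)
  rw [neg_div]
  exact neg_nonpos.2 (by positivity)

theorem norm_gaussDensity_smul_le (hσ : 0 < σ) (z : EuclideanSpace ℝ (Fin d)) :
    ‖gaussDensity d σ z • z‖ ≤ (2 * π * σ ^ 2) ^ (-(d : ℝ) / 2) * σ := by
  have h_lin : ‖z‖ ≤ σ * (‖z‖ ^ 2 / (2 * σ ^ 2) + 1) := by
    have h_gap : σ * (‖z‖ ^ 2 / (2 * σ ^ 2) + 1) - ‖z‖ = ((‖z‖ - σ) ^ 2 + σ ^ 2) / (2 * σ) := by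
      field_simp
      ring
    nlinarith [h_gap, show 0 ≤ ((‖z‖ - σ) ^ 2 + σ ^ 2) / (2 * σ) by positivity]
  have h_exp : exp (-‖z‖ ^ 2 / (2 * σ ^ 2)) * ‖z‖ ≤ σ := by
    rw [neg_div, exp_neg, inv_mul_le_iff₀ (exp_pos _)]
    calc ‖z‖ ≤ σ * (‖z‖ ^ 2 / (2 * σ ^ 2) + 1) := h_lin
      _ ≤ σ * exp (‖z‖ ^ 2 / (2 * σ ^ 2)) := by gcongr; exact add_one_le_exp _
      _ = exp (‖z‖ ^ 2 / (2 * σ ^ 2)) * σ := mul_comm _ _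
  rw [norm_smul, Real.norm_of_nonneg (gaussDensity_nonneg z), gaussDensity, mul_assoc]
  gcongr

theorem hasGradientAt_gaussDensity (z : EuclideanSpace ℝ (Fin d)) :
    HasGradientAt (gaussDensity d σ) (-(σ ^ 2)⁻¹ • gaussDensity d σ z • z) z := by
  have h_sq : HasFDerivAt (fun w : EuclideanSpace ℝ (Fin d) => ‖w‖ ^ 2) (2 • innerSL ℝ z) z := by
    simpa using (hasFDerivAt_id z).norm_sq
  have h := ((h_sq.const_mul (-(2 * σ ^ 2)⁻¹)).exp).const_mul ((2 * π * σ ^ 2) ^ (-(d : ℝ) / 2))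
  have h_eq : gaussDensity d σ =
      fun w => (2 * π * σ ^ 2) ^ (-(d : ℝ) / 2) * exp (-(2 * σ ^ 2)⁻¹ * ‖w‖ ^ 2) := by
    funext w
    simp only [gaussDensity]
    ring_nf
  rw [hasGradientAt_iff_hasFDerivAt]
  refine (h_eq ▸ h).congr_fderiv ?_
  ext w
  simp only [mul_inv_rev, neg_mul, neg_smul, smul_neg, neg_apply, smul_apply, coe_innerSL_apply,
    nsmul_eq_mul, Nat.cast_ofNat, smul_eq_mul,
    gaussDensity, map_neg, map_smul, toDual_apply_apply, neg_inj]
  ring_nf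

end GaussDensity

section Marginal

variable {d : ℕ} {σ : ℝ}

theorem integrable_gaussDensity_comp {Ω : Type*} [MeasurableSpace Ω] {μ : Measure Ω}
    [IsFiniteMeasure μ] {g : Ω → EuclideanSpace ℝ (Fin d)} (hg : AEStronglyMeasurable g μ) :
    Integrable (fun ω => gaussDensity d σ (g ω)) μ :=
  .of_bound (continuous_gaussDensity.comp_aestronglyMeasurable hg) _
    (.of_forall fun ω => by
      rw [Real.norm_of_nonneg (gaussDensity_nonneg _)]
      exact gaussDensity_le _)

theorem integrable_gaussDensity_comp_smul {Ω : Type*} [MeasurableSpace Ω] {μ : Measure Ω}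
    [IsFiniteMeasure μ] {g : Ω → EuclideanSpace ℝ (Fin d)} (hσ : 0 < σ)
    (hg : AEStronglyMeasurable g μ) :
    Integrable (fun ω => gaussDensity d σ (g ω) • g ω) μ :=
  .of_bound ((continuous_gaussDensity.comp_aestronglyMeasurable hg).smul hg) _
    (.of_forall fun ω => norm_gaussDensity_smul_le hσ (g ω))

theorem integral_gaussDensity_comp_pos {Ω : Type*} [MeasurableSpace Ω] {μ : Measure Ω}
    [IsFiniteMeasure μ] [NeZero μ] {g : Ω → EuclideanSpace ℝ (Fin d)} (hσ : 0 < σ)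
    (hg : AEStronglyMeasurable g μ) :
    0 < ∫ ω, gaussDensity d σ (g ω) ∂μ := by
  rw [integral_pos_iff_support_of_nonneg (fun ω => gaussDensity_nonneg _)
    (integrable_gaussDensity_comp hg),
    Function.support_eq_univ fun ω => (gaussDensity_pos hσ _).ne']
  exact Measure.measure_univ_pos.2 (NeZero.ne μ)

variable {μ : Measure (EuclideanSpace ℝ (Fin d))} [IsFiniteMeasure μ] {α : ℝ}

theorem hasGradientAt_integral_gaussDensity_sub_smul (hσ : 0 < σ) (x : EuclideanSpace ℝ (Fin d)) :
    HasGradientAt (fun x' => ∫ y, gaussDensity d σ (x' - α • y) ∂μ)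
      (-(σ ^ 2)⁻¹ • ∫ y, gaussDensity d σ (x - α • y) • (x - α • y) ∂μ) x := by
  have h_meas : ∀ x' : EuclideanSpace ℝ (Fin d), AEStronglyMeasurable (fun y => x' - α • y) μ :=
    fun x' => by fun_prop
  rw [← integral_smul]
  have h_bound : ∀ y x' : EuclideanSpace ℝ (Fin d),
      ‖-(σ ^ 2)⁻¹ • gaussDensity d σ (x' - α • y) • (x' - α • y)‖ ≤
        (σ ^ 2)⁻¹ * ((2 * π * σ ^ 2) ^ (-(d : ℝ) / 2) * σ) := fun y x' => by
    rw [norm_smul, norm_neg, norm_inv, norm_pow, Real.norm_of_nonneg hσ.le]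
    gcongr
    exact norm_gaussDensity_smul_le hσ _
  have h_grad : ∀ y x' : EuclideanSpace ℝ (Fin d),
      HasGradientAt (fun x'' => gaussDensity d σ (x'' - α • y))
        (-(σ ^ 2)⁻¹ • gaussDensity d σ (x' - α • y) • (x' - α • y)) x' := fun y x' => by
    rw [hasGradientAt_iff_hasFDerivAt, hasFDerivAt_comp_sub]
    exact (hasGradientAt_gaussDensity _).hasFDerivAt
  exact hasGradientAt_integral_of_dominated_of_gradient_le Filter.univ_mem
    (.of_forall fun x' => (integrable_gaussDensity_comp (h_meas x')).aestronglyMeasurable)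
    (integrable_gaussDensity_comp (h_meas x))
    ((integrable_gaussDensity_comp_smul hσ (h_meas x)).aestronglyMeasurable.fun_const_smul _)
    (.of_forall fun y x' _ => h_bound y x') (integrable_const _)
    (.of_forall fun y x' _ => h_grad y x')

theorem integral_gaussDensity_sub_smul_smul (hσ : 0 < σ) (hα : α ≠ 0)
    (x : EuclideanSpace ℝ (Fin d)) :
    ∫ y, gaussDensity d σ (x - α • y) • (x - α • y) ∂μ =
      (∫ y, gaussDensity d σ (x - α • y) ∂μ) • x -
        α • ∫ y, gaussDensity d σ (x - α • y) • y ∂μ := by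
  have h_meas : AEStronglyMeasurable (fun y => x - α • y) μ := by fun_prop
  have h_int_x : Integrable (fun y => gaussDensity d σ (x - α • y) • x) μ :=
    (integrable_gaussDensity_comp h_meas).smul_const x
  -- `φ(x - α y) • y = α⁻¹ • (φ(x - α y) • x - φ(x - α y) • (x - α y))`
  have h_int_y : Integrable (fun y => gaussDensity d σ (x - α • y) • y) μ := by
    have h := (h_int_x.sub (integrable_gaussDensity_comp_smul hσ h_meas)).smul α⁻¹
    refine h.congr (.of_forall fun y => ?_)
    simp only [Pi.smul_apply, Pi.sub_apply, ← smul_sub, sub_sub_cancel]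
    match_scalars
    field_simp
  simp only [smul_sub, smul_comm _ α]
  rw [integral_sub h_int_x (h_int_y.smul α : Integrable (fun y => α • _) μ), integral_smul_const,
    integral_smul]

end Marginal

/-- the score of the noise-perturbed marginal density
`p(x) = ∫ φ_σ(x − α y) dμ(y)` satisfies
`∇ log p(x) = (1/σ²)(−x + α (∫ φ_σ(x − α y) y dμ(y)) / (∫ φ_σ(x − α y) dμ(y)))`. -/
theorem stmt_3 (d : ℕ) (α σ : ℝ) (hα : 0 < α) (hσ : 0 < σ)
    (μ : Measure (EuclideanSpace ℝ (Fin d))) [IsProbabilityMeasure μ]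
    (x : EuclideanSpace ℝ (Fin d)) :
    gradient (fun x' => Real.log (∫ y, gaussDensity d σ (x' - α • y) ∂μ)) x =
      (1 / σ ^ 2) • (-x + α •
        ((∫ y, gaussDensity d σ (x - α • y) ∂μ)⁻¹ •
          ∫ y, gaussDensity d σ (x - α • y) • y ∂μ)) := by
  have h_pos : 0 < ∫ y, gaussDensity d σ (x - α • y) ∂μ :=
    integral_gaussDensity_comp_pos hσ (by fun_prop)
  rw [((hasGradientAt_integral_gaussDensity_sub_smul hσ x).log h_pos.ne').gradient,
    integral_gaussDensity_sub_smul_smul hσ hα.ne']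
  match_scalars <;> field_simp
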